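/- Let 𝒜 be a finite k-uniform family, S a finite set, and h a positive integer, and suppose the following regularity identity holds for h: for every family G ⊆ 𝒜(S), the ratio |G|/|𝒜(S)| equals the average over H ∈ ∂_h(𝒜(S)) of |G(H)|/|𝒜(S ∪ H)|. Let F ⊆ 𝒜(S) be a nonempty τ-homogeneous family with respect to 𝒜(S). Then |∂_h F| ≥ τ^{−h} · |∂_h(𝒜(S))|. -/

import Mathlib

open Finset
open scoped Classical

variable {γ : Type*}

/-- `F(B) = {F \ B : F ∈ F, B ⊆ F}`. -/
def famRestrict [DecidableEq γ] (F : Finset (Finset γ)) (B : Finset γ) : Finset (Finset γ) :=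
  (F.filter fun A => B ⊆ A).image fun A => A \ B

/-- `F[ℬ] = {F ∈ F : ∃ B ∈ ℬ, B ⊆ F}`. -/
def famAbove [DecidableEq γ] (F ℬ : Finset (Finset γ)) : Finset (Finset γ) :=
  F.filter fun A => ∃ B ∈ ℬ, B ⊆ A

/-- The shadow `∂_h F`. -/
def famShadow [DecidableEq γ] (F : Finset (Finset γ)) (h : ℕ) : Finset (Finset γ) :=
  F.biUnion fun A => Finset.powersetCard h A

/-- The shadow `∂_{≤h} F`. -/
def famShadowLe [DecidableEq γ] (F : Finset (Finset γ)) (h : ℕ) : Finset (Finset γ) :=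
  (Finset.range (h + 1)).biUnion fun j => famShadow F j

/-- `P` is a sunflower with `s` petals and core `K`: `P` consists of `s` sets, `K` is
the intersection of all members of `P`, and any two distinct members intersect in `K`. -/
def IsSunflower [DecidableEq γ] (P : Finset (Finset γ)) (s : ℕ) (K : Finset γ) : Prop :=
  P.card = s ∧ ∃ hP : P.Nonempty, K = P.inf' hP id ∧
    ∀ A ∈ P, ∀ B ∈ P, A ≠ B → A ∩ B = K

/-- `F` contains no sunflower with `s` petals (with arbitrary core). -/
def SunflowerFree [DecidableEq γ] (F : Finset (Finset γ)) (s : ℕ) : Prop :=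
  ∀ P ⊆ F, ∀ K : Finset γ, ¬ IsSunflower P s K

/-- `φ(s,t)`: the maximal size of a family of `t`-element sets with no sunflower
with `s` petals. -/
noncomputable def phi (s t : ℕ) : ℕ :=
  sSup {m : ℕ | ∃ F : Finset (Finset ℕ),
    (∀ A ∈ F, A.card = t) ∧ SunflowerFree F s ∧ F.card = m}

/-- `G` is `R`-spread: `|G(X)| ≤ R^{-|X|} |G|` for every `X`. -/
def IsSpread [DecidableEq γ] (R : ℝ) (G : Finset (Finset γ)) : Prop :=
  ∀ X : Finset γ, ((famRestrict G X).card : ℝ) ≤ R ^ (-(X.card : ℤ)) * G.card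

/-- `F` is `k`-uniform. -/
def IsUniform (F : Finset (Finset γ)) (k : ℕ) : Prop := ∀ A ∈ F, A.card = k

/-- `𝒜` is `(r,t)`-spread: `𝒜(T)` is `r`-spread for every `T ∈ ∂_{≤t} 𝒜`. -/
def IsRTSpread [DecidableEq γ] (𝒜 : Finset (Finset γ)) (r : ℝ) (t : ℕ) : Prop :=
  ∀ T ∈ famShadowLe 𝒜 t, IsSpread r (famRestrict 𝒜 T)

/-- `F` is `τ`-homogeneous with respect to `𝒜`:
`|F(X)| ⬝ |𝒜| ≤ τ^{|X|} ⬝ |F| ⬝ |𝒜(X)|` for every `X`. -/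
def IsHomog [DecidableEq γ] (τ : ℝ) (F 𝒜 : Finset (Finset γ)) : Prop :=
  ∀ X : Finset γ,
    ((famRestrict F X).card : ℝ) * 𝒜.card ≤ τ ^ X.card * F.card * (famRestrict 𝒜 X).card

/-! Apply the regularity identity to `G = F`: the density `|F| / |𝒜(S)|` is the average, over
`H ∈ ∂_h 𝒜(S)`, of `|F(H)| / |𝒜(S ∪ H)|`. Since `𝒜(S)(H) = 𝒜(S ∪ H)`, homogeneity bounds each
term by `τ^h` times the density, and a term vanishes unless `H ∈ ∂_h F`. Hence the density is at
most `τ^h · |∂_h F| / |∂_h 𝒜(S)|` times itself. -/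

section Restrict

variable [DecidableEq γ] {𝒜 F 𝒮 : Finset (Finset γ)} {S H X : Finset γ} {h : ℕ} {τ : ℝ}

lemma mem_famRestrict :
    X ∈ famRestrict F H ↔ ∃ A ∈ F, H ⊆ A ∧ A \ H = X := by
  simp only [famRestrict, mem_image, mem_filter, and_assoc]

lemma mem_famShadow : H ∈ famShadow F h ↔ ∃ A ∈ F, H ⊆ A ∧ H.card = h := by
  simp [famShadow, mem_powersetCard]

lemma card_eq_of_mem_famShadow (hH : H ∈ famShadow F h) : H.card = h := by
  obtain ⟨-, -, -, hcard⟩ := mem_famShadow.mp hH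
  exact hcard

lemma mem_famShadow_of_famRestrict_nonempty (hF : (famRestrict F H).Nonempty) :
    H ∈ famShadow F H.card := by
  obtain ⟨_, hX⟩ := hF
  obtain ⟨A, hA, hHA, -⟩ := mem_famRestrict.mp hX
  exact mem_famShadow.mpr ⟨A, hA, hHA, rfl⟩

lemma disjoint_of_mem_famShadow_famRestrict (hH : H ∈ famShadow (famRestrict 𝒜 S) h) :
    Disjoint S H := by
  obtain ⟨_, hC, hHC, -⟩ := mem_famShadow.mp hH
  obtain ⟨A, -, -, rfl⟩ := mem_famRestrict.mp hC
  exact disjoint_sdiff.mono_right hHC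

lemma famRestrict_famRestrict (hSH : Disjoint S H) :
    famRestrict (famRestrict 𝒜 S) H = famRestrict 𝒜 (S ∪ H) := by
  ext X
  simp only [mem_famRestrict]
  constructor
  · rintro ⟨_, ⟨A, hA, hSA, rfl⟩, hHA, rfl⟩
    exact ⟨A, hA, union_subset hSA (hHA.trans sdiff_subset),
      by rw [sdiff_sdiff_left, sup_eq_union]⟩
  · rintro ⟨A, hA, hSHA, rfl⟩
    obtain ⟨hSA, hHA⟩ := union_subset_iff.mp hSHA
    exact ⟨A \ S, ⟨A, hA, hSA, rfl⟩, subset_sdiff.mpr ⟨hHA, hSH.symm⟩,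
      by rw [sdiff_sdiff_left, sup_eq_union]⟩

lemma IsHomog.card_famRestrict_div_le (hhom : IsHomog τ F 𝒜) (h𝒜 : 0 < 𝒜.card)
    (hτ : 0 ≤ τ ^ X.card) :
    ((famRestrict F X).card : ℝ) / (famRestrict 𝒜 X).card ≤
      τ ^ X.card * F.card / 𝒜.card := by
  have h𝒜' : (0 : ℝ) < 𝒜.card := by exact_mod_cast h𝒜
  refine div_le_of_le_mul₀ (Nat.cast_nonneg _) (by positivity) ?_
  rw [div_mul_eq_mul_div, le_div_iff₀ h𝒜']
  exact hhom X

lemma IsHomog.sum_card_famRestrict_div_le (hhom : IsHomog τ F 𝒜) (h𝒜 : 0 < 𝒜.card)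
    (hτ : 0 ≤ τ ^ h) (h𝒮 : ∀ H ∈ 𝒮, H.card = h) :
    ∑ H ∈ 𝒮, ((famRestrict F H).card : ℝ) / (famRestrict 𝒜 H).card ≤
      (famShadow F h).card * (τ ^ h * F.card / 𝒜.card) := by
  rw [← sum_filter_of_ne (p := (· ∈ famShadow F h))]
  · calc _ ≤ (𝒮.filter (· ∈ famShadow F h)).card • (τ ^ h * F.card / 𝒜.card) := by
          refine sum_le_card_nsmul _ _ _ fun H hH => ?_
          obtain rfl := h𝒮 H (mem_filter.mp hH).1
          exact hhom.card_famRestrict_div_le h𝒜 hτ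
      _ ≤ _ := by
          rw [nsmul_eq_mul]
          gcongr
          exact fun H hH => (mem_filter.mp hH).2
  · intro H hH hne
    have hF : (famRestrict F H).Nonempty := by
      rw [nonempty_iff_ne_empty]
      rintro hempty
      simp [hempty] at hne
    simpa [h𝒮 H hH] using mem_famShadow_of_famRestrict_nonempty hF

end Restrict

theorem shadow_of_homogeneous_general {α : Type*} [DecidableEq α]
    (𝒜 : Finset (Finset α))
    (S : Finset α) (h : ℕ)
    (hreg : ∀ G ⊆ famRestrict 𝒜 S,
      (G.card : ℝ) / ((famRestrict 𝒜 S).card : ℝ) =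
        (∑ H ∈ famShadow (famRestrict 𝒜 S) h,
            ((famRestrict G H).card : ℝ) / ((famRestrict 𝒜 (S ∪ H)).card : ℝ))
          / ((famShadow (famRestrict 𝒜 S) h).card : ℝ))
    (τ : ℝ) (F : Finset (Finset α)) (hFA : F ⊆ famRestrict 𝒜 S) (hFne : F.Nonempty)
    (hhom : IsHomog τ F (famRestrict 𝒜 S)) :
    τ ^ (-(h:ℤ)) * ((famShadow (famRestrict 𝒜 S) h).card : ℝ) ≤
      ((famShadow F h).card : ℝ) := by
  set 𝒮 := famShadow (famRestrict 𝒜 S) h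
  rw [zpow_neg, zpow_natCast]
  rcases le_or_gt (τ ^ h) 0 with hτ | hτ
  · exact (mul_nonpos_of_nonpos_of_nonneg (inv_nonpos.mpr hτ) (Nat.cast_nonneg _)).trans
      (Nat.cast_nonneg _)
  have h𝒜 : 0 < (famRestrict 𝒜 S).card := (hFne.mono hFA).card_pos
  have hdensity : (0 : ℝ) < F.card / (famRestrict 𝒜 S).card := by
    have := hFne.card_pos
    positivity
  have hsum : ∑ H ∈ 𝒮, ((famRestrict F H).card : ℝ) / (famRestrict 𝒜 (S ∪ H)).card ≤
      (famShadow F h).card * (τ ^ h * F.card / (famRestrict 𝒜 S).card) := by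
    refine le_of_eq_of_le (sum_congr rfl fun H hH => ?_)
      (hhom.sum_card_famRestrict_div_le h𝒜 hτ.le fun _ => card_eq_of_mem_famShadow)
    rw [famRestrict_famRestrict (disjoint_of_mem_famShadow_famRestrict hH)]
  have h𝒮 : (𝒮.card : ℝ) ≠ 0 := by
    rintro h0
    rw [hreg F hFA, h0, div_zero] at hdensity
    exact hdensity.false
  rw [inv_mul_le_iff₀ hτ]
  refine le_of_mul_le_mul_right ?_ hdensity
  calc (𝒮.card : ℝ) * (F.card / (famRestrict 𝒜 S).card)
      = ∑ H ∈ 𝒮, ((famRestrict F H).card : ℝ) / (famRestrict 𝒜 (S ∪ H)).card := by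
        rw [hreg F hFA, mul_div_cancel₀ _ h𝒮]
    _ ≤ (famShadow F h).card * (τ ^ h * F.card / (famRestrict 𝒜 S).card) := hsum
    _ = τ ^ h * (famShadow F h).card * (F.card / (famRestrict 𝒜 S).card) := by ring

/-- Proposition 5.7 (shadows of homogeneous families are large). -/
theorem shadow_of_homogeneous {α : Type*} [DecidableEq α]
    (k : ℕ) (𝒜 : Finset (Finset α)) (hAunif : IsUniform 𝒜 k)
    (S : Finset α) (h : ℕ) (hh : 0 < h)
    (hreg : ∀ G ⊆ famRestrict 𝒜 S,
      (G.card : ℝ) / ((famRestrict 𝒜 S).card : ℝ) =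
        (∑ H ∈ famShadow (famRestrict 𝒜 S) h,
            ((famRestrict G H).card : ℝ) / ((famRestrict 𝒜 (S ∪ H)).card : ℝ))
          / ((famShadow (famRestrict 𝒜 S) h).card : ℝ))
    (τ : ℝ) (F : Finset (Finset α)) (hFA : F ⊆ famRestrict 𝒜 S) (hFne : F.Nonempty)
    (hhom : IsHomog τ F (famRestrict 𝒜 S)) :
    τ ^ (-(h:ℤ)) * ((famShadow (famRestrict 𝒜 S) h).card : ℝ) ≤
      ((famShadow F h).card : ℝ) :=
  shadow_of_homogeneous_general 𝒜 S h hreg τ F hFA hFne hhom
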